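/- For every y in the convex hull (over ℝ) of the feasible set F_P, S(y) > −∞; that is, the convex hull of the feasible set is contained in the Sion set S_P = {x ∈ ℂ^n | S(x) ≠ −∞}. -/

import Mathlib

open Matrix ComplexOrder

/-! For `φ ∈ Ψ` the Lagrangian `L φ` is a single quadratic function whose quadratic part is
`-A_ψ` with `A_ψ` positive semidefinite, so it is concave. Hence the points at which the family
`(L φ)_{φ ∈ Ψ}` is uniformly bounded below form a convex set. This set contains `F_P`, where
`L φ x ≥ f_o x`, and therefore also its convex hull; on it `S > -∞`. -/

section Quadratic

variable {𝕜 ι : Type*} [RCLike 𝕜] [Fintype ι]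

def quadFun (M : Matrix ι ι 𝕜) (s : ι → 𝕜) (c : ℝ) (x : ι → 𝕜) : ℝ :=
  2 * RCLike.re (star s ⬝ᵥ x) - RCLike.re (star x ⬝ᵥ M *ᵥ x) + c

theorem quadFun_smul_add_smul (M : Matrix ι ι 𝕜) (s : ι → 𝕜) (c : ℝ) {a b : ℝ} (hab : a + b = 1)
    (x z : ι → 𝕜) :
    quadFun M s c (a • x + b • z) = a * quadFun M s c x + b * quadFun M s c z
      + a * b * RCLike.re (star (x - z) ⬝ᵥ M *ᵥ (x - z)) := by
  obtain rfl : b = 1 - a := by linarith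
  simp only [quadFun, star_add, star_sub, star_smul, conj_trivial, smul_add, RCLike.smul_re,
    RCLike.star_def, mulVec_add, mulVec_sub, mulVec_smul, dotProduct_add,
    add_dotProduct, dotProduct_sub, sub_dotProduct, dotProduct_smul, smul_dotProduct,
    map_add, map_sub]
  ring

theorem Matrix.PosSemidef.concaveOn_quadFun {M : Matrix ι ι 𝕜} (hM : M.PosSemidef)
    (s : ι → 𝕜) (c : ℝ) : ConcaveOn ℝ Set.univ (quadFun M s c) := by
  refine ⟨convex_univ, fun x _ z _ a b ha hb hab => ?_⟩
  rw [quadFun_smul_add_smul M s c hab, smul_eq_mul, smul_eq_mul]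
  exact le_add_of_nonneg_right (mul_nonneg (mul_nonneg ha hb) (hM.re_dotProduct_nonneg _))

theorem quadFun_add_sum_smul {J : Type*} [Fintype J] (M : Matrix ι ι 𝕜) (s : ι → 𝕜) (c : ℝ)
    (N : J → Matrix ι ι 𝕜) (t : J → ι → 𝕜) (d : J → ℝ) (φ : J → ℝ) (x : ι → 𝕜) :
    quadFun (M + ∑ j, φ j • N j) (s + ∑ j, φ j • t j) (c + ∑ j, φ j * d j) x
      = quadFun M s c x + ∑ j, φ j * quadFun (N j) (t j) (d j) x := by
  simp only [quadFun, star_add, star_sum, star_smul, star_trivial, add_mulVec, sum_mulVec,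
    smul_mulVec, add_dotProduct, sum_dotProduct, dotProduct_add, dotProduct_sum, smul_dotProduct,
    dotProduct_smul, map_add, map_sum, RCLike.smul_re, mul_add, mul_sub, Finset.mul_sum,
    Finset.sum_add_distrib, Finset.sum_sub_distrib]
  simp only [mul_left_comm (2 : ℝ)]
  ring

end Quadratic

theorem convex_setOf_exists_forall_le_of_concaveOn {E ι : Type*} [AddCommGroup E] [Module ℝ E]
    {g : ι → E → ℝ} {I : Set ι} (hg : ∀ i ∈ I, ConcaveOn ℝ Set.univ (g i)) :
    Convex ℝ {x | ∃ m, ∀ i ∈ I, m ≤ g i x} := by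
  rintro x ⟨m, hm⟩ z ⟨m', hm'⟩ a b ha hb hab
  refine ⟨a * m + b * m', fun i hi => ?_⟩
  calc a * m + b * m' ≤ a * g i x + b * g i z := by
        gcongr
        exacts [hm i hi, hm' i hi]
    _ ≤ g i (a • x + b • z) := (hg i hi).2 trivial trivial ha hb hab

theorem convexHull_subset_sionSet_general
    (n : ℕ) (J : Type) [Fintype J]
    (Ao : Matrix (Fin n) (Fin n) ℂ) (A : J → Matrix (Fin n) (Fin n) ℂ)
    (so : Fin n → ℂ) (s : J → Fin n → ℂ) (co : ℝ) (c : J → ℝ)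
    (fo : (Fin n → ℂ) → ℝ)
    (hfo : ∀ x, fo x = 2 * (star so ⬝ᵥ x).re - (star x ⬝ᵥ Ao.mulVec x).re + co)
    (f : J → (Fin n → ℂ) → ℝ)
    (hf : ∀ j x, f j x = 2 * (star (s j) ⬝ᵥ x).re - (star x ⬝ᵥ (A j).mulVec x).re + c j)
    (L : (J → ℝ) → (Fin n → ℂ) → ℝ)
    (hL : ∀ φ x, L φ x = fo x + ∑ j, φ j * f j x)
    (Ψ : Set (J → ℝ))
    (hΨ : Ψ = {φ | (∀ j, 0 ≤ φ j) ∧ (Ao + ∑ j, φ j • A j).PosSemidef})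
    (FP : Set (Fin n → ℂ))
    (hFP : FP = {x | ∀ j, 0 ≤ f j x})
    (y : Fin n → ℂ) (hy : y ∈ convexHull ℝ FP) :
    (⊥ : EReal) < ⨅ φ ∈ Ψ, (L φ y : EReal) := by
  have hL_eq : ∀ φ, L φ = quadFun (Ao + ∑ j, φ j • A j) (so + ∑ j, φ j • s j)
      (co + ∑ j, φ j * c j) := fun φ => funext fun x => by
    rw [quadFun_add_sum_smul, hL, hfo]
    simp only [hf]
    rfl
  have hconcave : ∀ φ ∈ Ψ, ConcaveOn ℝ Set.univ (L φ) := by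
    intro φ hφ
    rw [hΨ] at hφ
    rw [hL_eq]
    exact hφ.2.concaveOn_quadFun _ _
  have hFP_sub : FP ⊆ {x | ∃ m, ∀ φ ∈ Ψ, m ≤ L φ x} := by
    intro x hx
    rw [hFP] at hx
    refine ⟨fo x, fun φ hφ => ?_⟩
    rw [hΨ] at hφ
    rw [hL, le_add_iff_nonneg_right]
    exact Finset.sum_nonneg fun j _ => mul_nonneg (hφ.1 j) (hx j)
  obtain ⟨m, hm⟩ := convexHull_min hFP_sub
    (convex_setOf_exists_forall_le_of_concaveOn hconcave) hy
  exact (EReal.bot_lt_coe m).trans_le (le_iInf₂ fun φ hφ => EReal.coe_le_coe_iff.2 (hm φ hφ))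

/-- Corollary to Lemma 1. The convex hull of the feasible set is
contained in the Sion set: for every `y` in the convex hull of `F_P`, `S(y) > -∞`. -/
theorem convexHull_subset_sionSet
    (n : ℕ) (hn : 1 ≤ n) (J : Type) [Fintype J]
    (Ao : Matrix (Fin n) (Fin n) ℂ) (A : J → Matrix (Fin n) (Fin n) ℂ)
    (so : Fin n → ℂ) (s : J → Fin n → ℂ) (co : ℝ) (c : J → ℝ)
    (hAo : Ao.IsHermitian) (hA : ∀ j, (A j).IsHermitian)
    (fo : (Fin n → ℂ) → ℝ)
    (hfo : ∀ x, fo x = 2 * (star so ⬝ᵥ x).re - (star x ⬝ᵥ Ao.mulVec x).re + co)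
    (f : J → (Fin n → ℂ) → ℝ)
    (hf : ∀ j x, f j x = 2 * (star (s j) ⬝ᵥ x).re - (star x ⬝ᵥ (A j).mulVec x).re + c j)
    (L : (J → ℝ) → (Fin n → ℂ) → ℝ)
    (hL : ∀ φ x, L φ x = fo x + ∑ j, φ j * f j x)
    (Ψ : Set (J → ℝ))
    (hΨ : Ψ = {φ | (∀ j, 0 ≤ φ j) ∧ (Ao + ∑ j, φ j • A j).PosSemidef})
    (hΨne : Ψ.Nonempty)
    (FP : Set (Fin n → ℂ))
    (hFP : FP = {x | ∀ j, 0 ≤ f j x})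
    (y : Fin n → ℂ) (hy : y ∈ convexHull ℝ FP) :
    (⊥ : EReal) < ⨅ φ ∈ Ψ, (L φ y : EReal) :=
  convexHull_subset_sionSet_general n J Ao A so s co c fo hfo f hf L hL Ψ hΨ FP hFP y hy
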